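/- Let t_1 = 22 and t_{i+1} = t_i(t_i−1)+1 for i ≥ 1, let C = Σ_{i=1}^∞ 1/(t_i−1), and let R = 5/3 + C/2. Let β_1 = 58/529, β_2 = 3 − (4−2β_1)/((3−R)(2−β_1)−1), β_3 = 148/287, β_4 = 15/23, β_5 = 13/23. Define w : (0,1] → ℝ by w(1) = 1; w(x) = (1−β_i)/(i+1−β_i) for x ∈ [1/(i+1), 1/i) and 1 ≤ i ≤ 5; and w(x) = 0 for x ∈ (0,1/6). Then for every finite multiset T of reals in (0,1] with Σ_{t∈T} t < 1 and every a ∈ (0,1], it holds that w(a) + Σ_{t∈T} w(t) ≤ R. -/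

import Mathlib

open scoped BigOperators

noncomputable section

/-- The sequence `t₁ = 22`, `t_{i+1} = t_i(t_i − 1) + 1` (0-indexed: `t 0 = 22`). -/
def t : ℕ → ℕ
  | 0 => 22
  | n + 1 => t n * (t n - 1) + 1

/-- `C = Σ_{i=1}^∞ 1/(t_i − 1)`. -/
def C : ℝ := ∑' i : ℕ, 1 / ((t i : ℝ) - 1)

/-- `R = 5/3 + C/2 ≈ 1.691561`. -/
def R : ℝ := 5 / 3 + C / 2

def β : ℕ → ℝ := fun i =>
  if i = 1 then 58 / 529
  else if i = 2 then 3 - (4 - 2 * (58 / 529 : ℝ)) / ((3 - R) * (2 - 58 / 529) - 1)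
  else if i = 3 then 148 / 287
  else if i = 4 then 15 / 23
  else 13 / 23

/-- The weight function `w` for the first part of the input: `w(1) = 1`,
`w(x) = (1−β_i)/(i+1−β_i)` for `x ∈ [1/(i+1), 1/i)`, `1 ≤ i ≤ 5`, and
`w(x) = 0` for `x ∈ (0, 1/6)`. -/
def w (x : ℝ) : ℝ :=
  if x = 1 then 1
  else if 1 / 2 ≤ x then (1 - β 1) / (2 - β 1)
  else if 1 / 3 ≤ x then (1 - β 2) / (3 - β 2)
  else if 1 / 4 ≤ x then (1 - β 3) / (4 - β 3)
  else if 1 / 5 ≤ x then (1 - β 4) / (5 - β 4)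
  else if 1 / 6 ≤ x then (1 - β 5) / (6 - β 5)
  else 0

/-!
An item of size `x < 1` has weight `0` unless `x ≥ 1/6`, and `w` is constant on each of
`[1/2, 1)`, `[1/3, 1/2)`, `[1/4, 1/3)`, `[1/6, 1/4)` (it is `2/25` on both `[1/5, 1/4)` and
`[1/6, 1/5)`). The class counts `n₁, …, n₄` of a multiset of total size below `1` thus satisfy
`6 n₁ + 4 n₂ + 3 n₃ + 2 n₄ ≤ 11`, and a finite check bounds the weight of such a knapsack by
`w(1/2) + w(1/3)`, which is `R - 1` because `β₂` is chosen to make `1 + w(1/2) + w(1/3) = R`.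
The last item `a` adds at most `w(1) = 1`.
-/

theorem add_one_le_t (n : ℕ) : 21 * 22 ^ n + 1 ≤ t n := by
  induction n with
  | zero => simp [t]
  | succ n ih =>
    have : 0 < 22 ^ n := by positivity
    have : 22 * (21 * 22 ^ n) ≤ t n * (t n - 1) := Nat.mul_le_mul (by omega) (by omega)
    simp only [t, pow_succ]
    omega

theorem le_t_sub_one (n : ℕ) : (21 * 22 ^ n : ℝ) ≤ t n - 1 := by
  have : (21 * 22 ^ n + 1 : ℝ) ≤ t n := by exact_mod_cast add_one_le_t n
  linarith

theorem one_div_t_sub_one_le (n : ℕ) : 1 / ((t n : ℝ) - 1) ≤ 1 / 21 * (1 / 22) ^ n := by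
  calc 1 / ((t n : ℝ) - 1) ≤ 1 / (21 * 22 ^ n) :=
        one_div_le_one_div_of_le (by positivity) (le_t_sub_one n)
    _ = 1 / 21 * (1 / 22) ^ n := by rw [one_div_pow, one_div_mul_one_div]

theorem one_div_t_sub_one_nonneg (n : ℕ) : 0 ≤ 1 / ((t n : ℝ) - 1) :=
  one_div_nonneg.mpr ((by positivity : (0 : ℝ) ≤ 21 * 22 ^ n).trans (le_t_sub_one n))

theorem summable_one_div_t_sub_one : Summable fun n ↦ 1 / ((t n : ℝ) - 1) :=
  .of_nonneg_of_le one_div_t_sub_one_nonneg one_div_t_sub_one_le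
    ((summable_geometric_of_lt_one (by norm_num) (by norm_num)).mul_left _)

theorem R_ge : 71 / 42 ≤ R := by
  have h := summable_one_div_t_sub_one.le_tsum 0 fun n _ ↦ one_div_t_sub_one_nonneg n
  rw [show 1 / ((t 0 : ℝ) - 1) = 1 / 21 by norm_num [t]] at h
  rw [R, C]
  linarith

theorem R_le : R ≤ 746 / 441 := by
  have hC : C ≤ ∑' n : ℕ, 1 / 21 * (1 / 22 : ℝ) ^ n :=
    summable_one_div_t_sub_one.tsum_le_tsum one_div_t_sub_one_le
      ((summable_geometric_of_lt_one (by norm_num) (by norm_num)).mul_left _)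
  rw [tsum_mul_left, tsum_geometric_of_lt_one (by norm_num) (by norm_num)] at hC
  rw [R]
  linarith

theorem one_add_div_two_sub_add_div_three_sub {b β₂ r : ℝ} (hb : 2 - b ≠ 0)
    (hr : (3 - r) * (2 - b) - 1 ≠ 0) (hβ₂ : β₂ = 3 - (4 - 2 * b) / ((3 - r) * (2 - b) - 1)) :
    1 + (1 - b) / (2 - b) + (1 - β₂) / (3 - β₂) = r := by
  rw [hβ₂, sub_sub_cancel, show 4 - 2 * b = 2 * (2 - b) by ring]
  generalize hD : (3 - r) * (2 - b) - 1 = D at hr ⊢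
  field_simp
  linear_combination 2 * hD

theorem one_add_w_half_add_w_third :
    1 + 471 / 1000 + (1 - β 2) / (3 - β 2) = R := by
  have h := one_add_div_two_sub_add_div_three_sub (b := β 1) (r := R) (by norm_num [β])
    (by norm_num [β]; nlinarith [R_le]) rfl
  rwa [show (1 - β 1) / (2 - β 1) = 471 / 1000 by norm_num [β]] at h

theorem w_third_mem : (1 - β 2) / (3 - β 2) ∈ Set.Icc (219 / 1000) (1 / 4) := by
  have := one_add_w_half_add_w_third
  constructor <;> linarith [R_ge, R_le]

theorem w_cases {x : ℝ} (hx : x < 1) :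
    (1 / 2 ≤ x ∧ w x = 471 / 1000) ∨ (1 / 3 ≤ x ∧ w x = (1 - β 2) / (3 - β 2)) ∨
      (1 / 4 ≤ x ∧ w x = 139 / 1000) ∨ (1 / 6 ≤ x ∧ w x = 2 / 25) ∨ w x = 0 := by
  unfold w
  split_ifs with h₁ h₂ h₃ h₄ h₅ h₆
  · exact absurd h₁ hx.ne
  · exact Or.inl ⟨h₂, by norm_num [β]⟩
  · exact Or.inr <| Or.inl ⟨h₃, rfl⟩
  · exact Or.inr <| Or.inr <| Or.inl ⟨h₄, by norm_num [β]⟩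
  · exact Or.inr <| Or.inr <| Or.inr <| Or.inl ⟨by linarith, by norm_num [β]⟩
  · exact Or.inr <| Or.inr <| Or.inr <| Or.inl ⟨h₆, by norm_num [β]⟩
  · exact Or.inr <| Or.inr <| Or.inr <| Or.inr rfl

theorem w_le_one (x : ℝ) : w x ≤ 1 := by
  unfold w
  split_ifs <;> first | linarith [w_third_mem.2] | norm_num [β]

theorem exists_class_counts (T : Multiset ℝ) (hT : ∀ x ∈ T, 0 ≤ x ∧ x < 1) :
    ∃ n₁ n₂ n₃ n₄ : ℕ,
      (T.map w).sum = n₁ * (471 / 1000) + n₂ * ((1 - β 2) / (3 - β 2)) + n₃ * (139 / 1000)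
        + n₄ * (2 / 25) ∧
      n₁ / 2 + n₂ / 3 + n₃ / 4 + n₄ / 6 ≤ T.sum := by
  induction T using Multiset.induction_on with
  | empty => exact ⟨0, 0, 0, 0, by simp, by simp⟩
  | cons x T ih =>
    obtain ⟨n₁, n₂, n₃, n₄, hw, hs⟩ := ih fun y hy ↦ hT y (Multiset.mem_cons_of_mem hy)
    obtain ⟨hx₀, hx₁⟩ := hT x (Multiset.mem_cons_self x T)
    rw [Multiset.map_cons, Multiset.sum_cons, Multiset.sum_cons, hw]
    rcases w_cases hx₁ with ⟨hx, hwx⟩ | ⟨hx, hwx⟩ | ⟨hx, hwx⟩ | ⟨hx, hwx⟩ | hwx <;> rw [hwx]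
    · exact ⟨n₁ + 1, n₂, n₃, n₄, by push_cast; ring, by push_cast; linarith⟩
    · exact ⟨n₁, n₂ + 1, n₃, n₄, by push_cast; ring, by push_cast; linarith⟩
    · exact ⟨n₁, n₂, n₃ + 1, n₄, by push_cast; ring, by push_cast; linarith⟩
    · exact ⟨n₁, n₂, n₃, n₄ + 1, by push_cast; ring, by push_cast; linarith⟩
    · exact ⟨n₁, n₂, n₃, n₄, by ring, by linarith⟩

/- The first bound serves the case `n₂ = 0` (it is tight at `n₁ = n₃ = n₄ = 1`, hence the
lower bound `219/1000` on `w(1/3)` below), the second the case `n₂ ≥ 1`, where `w(1/3) ≤ 1/4`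
bounds the surplus `(n₂ - 1) w(1/3)`. -/
theorem knapsack_nat {n₁ n₂ n₃ n₄ : ℕ} (h : 6 * n₁ + 4 * n₂ + 3 * n₃ + 2 * n₄ ≤ 11) :
    471 * n₁ + 139 * n₃ + 80 * n₄ ≤ 690 ∧ 471 * n₁ + 250 * n₂ + 139 * n₃ + 80 * n₄ ≤ 721 := by
  have : n₁ ≤ 1 := by omega
  have : n₃ ≤ 3 := by omega
  interval_cases n₁ <;> interval_cases n₃ <;> omega

theorem knapsack {n₁ n₂ n₃ n₄ : ℕ} {u : ℝ} (hu : u ∈ Set.Icc (219 / 1000) (1 / 4))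
    (h : (n₁ : ℝ) / 2 + n₂ / 3 + n₃ / 4 + n₄ / 6 < 1) :
    n₁ * (471 / 1000) + n₂ * u + n₃ * (139 / 1000) + n₄ * (2 / 25) ≤ 471 / 1000 + u := by
  have hcost : 6 * n₁ + 4 * n₂ + 3 * n₃ + 2 * n₄ < 12 := by
    exact_mod_cast (by linarith : (6 * n₁ + 4 * n₂ + 3 * n₃ + 2 * n₄ : ℝ) < 12)
  obtain ⟨h₁, h₂⟩ := knapsack_nat (by omega : 6 * n₁ + 4 * n₂ + 3 * n₃ + 2 * n₄ ≤ 11)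
  have h₁' : (471 * n₁ + 139 * n₃ + 80 * n₄ : ℝ) ≤ 690 := by exact_mod_cast h₁
  have h₂' : (471 * n₁ + 250 * n₂ + 139 * n₃ + 80 * n₄ : ℝ) ≤ 721 := by exact_mod_cast h₂
  rcases Nat.eq_zero_or_pos n₂ with hn₂ | hn₂
  · subst hn₂
    push_cast
    linarith [hu.1]
  · have : (1 : ℝ) ≤ n₂ := by exact_mod_cast hn₂
    nlinarith [hu.2]

theorem stmt7_general (T : Multiset ℝ) (hT : ∀ x ∈ T, 0 < x ∧ x ≤ 1)
    (hsum : T.sum < 1) (a : ℝ) :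
    w a + (T.map w).sum ≤ R := by
  have hT₀ : ∀ x ∈ T, 0 ≤ x ∧ x < 1 := fun x hx ↦
    ⟨(hT x hx).1.le,
      (Multiset.single_le_sum (fun y hy ↦ (hT y hy).1.le) x hx).trans_lt hsum⟩
  obtain ⟨n₁, n₂, n₃, n₄, hw, hsize⟩ := exists_class_counts T hT₀
  have := knapsack w_third_mem (hsize.trans_lt hsum)
  linarith [w_le_one a, one_add_w_half_add_w_third]

/-- every bin (a multiset `T` of total size below 1 plus one
additional last item `a`) has total `w`-weight at most `R`. -/
theorem stmt7 (T : Multiset ℝ) (hT : ∀ x ∈ T, 0 < x ∧ x ≤ 1)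
    (hsum : T.sum < 1) (a : ℝ) (ha : 0 < a) (ha1 : a ≤ 1) :
    w a + (T.map w).sum ≤ R :=
  stmt7_general T hT hsum a

end
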